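/- Let G be a finite simple 3-regular graph with a perfect star packing, and let C be the set of vertices that are centers of the stars (the vertices of degree 3 within the packing subgraph). Then C is an independent set in G, and every vertex of G not in C is adjacent to exactly one vertex of C; that is, C is an efficient dominating set of G of size |V(G)|/4. -/

import Mathlib

/-!
Every component of the packing `H` is a copy of `K_{1,3}`, so in `H` each vertex has degree 3
(a center) or 1 (a leaf) and each edge joins a center to a leaf. A center already has degree 3
in `H`, so by 3-regularity all its `G`-edges are `H`-edges: hence two centers are never
`G`-adjacent, and the only center adjacent to a leaf is its unique `H`-neighbor. Double counting
the edges of `H` gives `3 |C| = |V \ C|`, i.e. `|V| = 4 |C|`.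
-/

open SimpleGraph

/-- The star graph `K_{1,3}`: one center adjacent to three leaves. -/
def starK13 : SimpleGraph (Unit ⊕ Fin 3) := completeBipartiteGraph Unit (Fin 3)

lemma starK13_ncard_neighborSet_inl (u : Unit) : (starK13.neighborSet (.inl u)).ncard = 3 := by
  have : starK13.neighborSet (.inl u) = Set.range Sum.inr := by
    ext (_ | _) <;> simp [starK13]
  rw [this, Set.ncard_range_of_injective Sum.inr_injective, Nat.card_eq_fintype_card,
    Fintype.card_fin]

lemma starK13_ncard_neighborSet_inr (i : Fin 3) : (starK13.neighborSet (.inr i)).ncard = 1 := by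
  have : starK13.neighborSet (.inr i) = {.inl ()} := by
    ext (_ | _) <;> simp [starK13]
  rw [this, Set.ncard_singleton]

lemma starK13_ncard_neighborSet_eq_three_or_one (x : Unit ⊕ Fin 3) :
    (starK13.neighborSet x).ncard = 3 ∨ (starK13.neighborSet x).ncard = 1 := by
  rcases x with u | i
  · exact .inl (starK13_ncard_neighborSet_inl u)
  · exact .inr (starK13_ncard_neighborSet_inr i)

lemma starK13_ncard_neighborSet_eq_three_iff_of_adj {x y : Unit ⊕ Fin 3} (h : starK13.Adj x y) :
    (starK13.neighborSet x).ncard = 3 ↔ (starK13.neighborSet y).ncard = 1 := by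
  rcases x with u | i <;> rcases y with v | j
  · simp [starK13] at h
  · simp [starK13_ncard_neighborSet_inl, starK13_ncard_neighborSet_inr]
  · simp [starK13_ncard_neighborSet_inl, starK13_ncard_neighborSet_inr]
  · simp [starK13] at h

namespace SimpleGraph

variable {V W : Type*}

lemma Iso.ncard_neighborSet {G : SimpleGraph V} {G' : SimpleGraph W} (e : G ≃g G') (v : V) :
    (G'.neighborSet (e v)).ncard = (G.neighborSet v).ncard := by
  rw [← Nat.card_coe_set_eq, ← Nat.card_coe_set_eq]
  exact Nat.card_congr (e.mapNeighborSet v).symm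

lemma ConnectedComponent.ncard_neighborSet_induce_supp {G : SimpleGraph V}
    (c : G.ConnectedComponent) {v : V} (hv : v ∈ c.supp) :
    ((G.induce c.supp).neighborSet ⟨v, hv⟩).ncard = (G.neighborSet v).ncard := by
  rw [← Set.ncard_image_of_injective _ Subtype.val_injective]
  congr 1
  ext w
  constructor
  · rintro ⟨w, hw, rfl⟩
    exact hw
  · intro hw
    exact ⟨⟨w, c.mem_supp_of_adj_mem_supp hv hw⟩, hw, rfl⟩

lemma Subgraph.ncard_neighborSet_coe {G : SimpleGraph V} (H : G.Subgraph) (v : H.verts) :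
    (H.coe.neighborSet v).ncard = (H.neighborSet v).ncard := by
  rw [← Nat.card_coe_set_eq, ← Nat.card_coe_set_eq]
  exact Nat.card_congr (Subgraph.coeNeighborSetEquiv v)

section StarComponents

variable {K : SimpleGraph W}

lemma ncard_neighborSet_eq_starK13 (c : K.ConnectedComponent) (e : K.induce c.supp ≃g starK13)
    {v : W} (hv : v ∈ c.supp) :
    (K.neighborSet v).ncard = (starK13.neighborSet (e ⟨v, hv⟩)).ncard := by
  rw [e.ncard_neighborSet, c.ncard_neighborSet_induce_supp]

variable (hK : ∀ c : K.ConnectedComponent, Nonempty (K.induce c.supp ≃g starK13))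
include hK

lemma ncard_neighborSet_eq_three_or_one_of_starK13 (v : W) :
    (K.neighborSet v).ncard = 3 ∨ (K.neighborSet v).ncard = 1 := by
  obtain ⟨e⟩ := hK (K.connectedComponentMk v)
  rw [ncard_neighborSet_eq_starK13 _ e rfl]
  exact starK13_ncard_neighborSet_eq_three_or_one _

lemma ncard_neighborSet_eq_three_iff_of_adj_of_starK13 {v w : W} (h : K.Adj v w) :
    (K.neighborSet v).ncard = 3 ↔ (K.neighborSet w).ncard = 1 := by
  set c := K.connectedComponentMk v
  obtain ⟨e⟩ := hK c
  have hv : v ∈ c.supp := rfl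
  have hw : w ∈ c.supp := c.mem_supp_of_adj_mem_supp hv h
  rw [ncard_neighborSet_eq_starK13 c e hv, ncard_neighborSet_eq_starK13 c e hw]
  exact starK13_ncard_neighborSet_eq_three_iff_of_adj (e.map_adj_iff.mpr h)

end StarComponents

section CentersAndLeaves

open Finset

variable {G K : SimpleGraph V}
  (hdeg : ∀ v, (K.neighborSet v).ncard = 3 ∨ (K.neighborSet v).ncard = 1)
  (hadj : ∀ ⦃v w⦄, K.Adj v w →
    ((K.neighborSet v).ncard = 3 ↔ (K.neighborSet w).ncard = 1))

lemma neighborSet_eq_of_le_of_ncard_eq_degree (hKG : K ≤ G) {v : V}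
    [Fintype (G.neighborSet v)] (h : (K.neighborSet v).ncard = G.degree v) :
    K.neighborSet v = G.neighborSet v :=
  Set.eq_of_subset_of_ncard_le (fun _ hw ↦ hKG hw)
    (by rw [h, Set.ncard_eq_toFinset_card', ← card_neighborSet_eq_degree, Set.toFinset_card])

lemma ncard_neighborSet_eq_card_filter_adj [DecidableRel K.Adj] {v : V} {t : Finset V}
    (h : K.neighborSet v ⊆ t) : (K.neighborSet v).ncard = #{w ∈ t | K.Adj v w} := by
  rw [← Set.ncard_coe_finset, coe_filter]
  congr 1
  ext w
  exact ⟨fun hw ↦ ⟨h hw, hw⟩, And.right⟩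

include hdeg hadj in
lemma card_eq_four_mul_ncard_setOf_ncard_neighborSet_eq_three [Fintype V] :
    Fintype.card V = 4 * {v | (K.neighborSet v).ncard = 3}.ncard := by
  classical
  set s : Finset V := {v | (K.neighborSet v).ncard = 3}
  have hs : ∀ v, v ∈ s ↔ (K.neighborSet v).ncard = 3 := by simp [s]
  have key : #s * 3 = #sᶜ * 1 := by
    refine card_mul_eq_card_mul K.Adj (fun a ha ↦ ?_) (fun b hb ↦ ?_)
    · rw [hs] at ha
      rw [bipartiteAbove, ← ncard_neighborSet_eq_card_filter_adj, ha]
      intro w hw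
      have := (hadj hw).mp ha
      rw [mem_coe, mem_compl, hs]
      omega
    · rw [mem_compl, hs] at hb
      simp only [bipartiteBelow, K.adj_comm _ b]
      rw [← ncard_neighborSet_eq_card_filter_adj, (hdeg b).resolve_left hb]
      intro w hw
      exact (hs w).mpr ((hadj hw.symm).mpr ((hdeg b).resolve_left hb))
  have hcard : {v | (K.neighborSet v).ncard = 3}.ncard = #s := by
    rw [← Set.ncard_coe_finset]
    simp [s]
  have := card_compl s
  have := card_le_univ s
  rw [hcard]
  omega

lemma adj_of_adj_of_ncard_neighborSet_eq_three [G.LocallyFinite] (hKG : K ≤ G)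
    (hreg : G.IsRegularOfDegree 3) {u w : V} (hu : (K.neighborSet u).ncard = 3) (h : G.Adj u w) :
    K.Adj u w := by
  have := neighborSet_eq_of_le_of_ncard_eq_degree hKG (hu.trans (hreg u).symm)
  rw [← mem_neighborSet, this]
  exact h

include hadj in
lemma not_adj_of_ncard_neighborSet_eq_three [G.LocallyFinite] (hKG : K ≤ G)
    (hreg : G.IsRegularOfDegree 3) {u w : V} (hu : (K.neighborSet u).ncard = 3)
    (hw : (K.neighborSet w).ncard = 3) : ¬ G.Adj u w := fun h ↦ by
  have := (hadj (adj_of_adj_of_ncard_neighborSet_eq_three hKG hreg hu h)).mp hu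
  omega

include hdeg hadj in
lemma existsUnique_adj_ncard_neighborSet_eq_three [G.LocallyFinite] (hKG : K ≤ G)
    (hreg : G.IsRegularOfDegree 3) {v : V} (hv : (K.neighborSet v).ncard ≠ 3) :
    ∃! u, (K.neighborSet u).ncard = 3 ∧ G.Adj v u := by
  obtain ⟨w, hw⟩ := Set.ncard_eq_one.mp ((hdeg v).resolve_left hv)
  have hvw : K.Adj v w := (hw ▸ Set.mem_singleton w : w ∈ K.neighborSet v)
  refine ⟨w, ⟨(hadj hvw.symm).mpr ((hdeg v).resolve_left hv), hKG hvw⟩, ?_⟩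
  rintro u ⟨hu, huv⟩
  have hKuv := adj_of_adj_of_ncard_neighborSet_eq_three hKG hreg hu huv.symm
  rw [← Set.mem_singleton_iff, ← hw]
  exact hKuv.symm

end CentersAndLeaves

end SimpleGraph

theorem star_centers_efficient_dominating_general {V : Type*} [Fintype V]
    (G : SimpleGraph V) [DecidableRel G.Adj] (hreg : G.IsRegularOfDegree 3)
    (H : G.Subgraph) (hsp : H.IsSpanning)
    (hstar : ∀ c : H.coe.ConnectedComponent, Nonempty (H.coe.induce c.supp ≃g starK13)) :
    (∀ u ∈ {v | (H.neighborSet v).ncard = 3}, ∀ w ∈ {v | (H.neighborSet v).ncard = 3},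
        ¬ G.Adj u w) ∧
    (∀ v, v ∉ {v | (H.neighborSet v).ncard = 3} →
        ∃! u, u ∈ {v | (H.neighborSet v).ncard = 3} ∧ G.Adj v u) ∧
    {v | (H.neighborSet v).ncard = 3}.ncard = Fintype.card V / 4 := by
  have hdeg (v : V) : (H.neighborSet v).ncard = 3 ∨ (H.neighborSet v).ncard = 1 := by
    simpa only [H.ncard_neighborSet_coe] using
      ncard_neighborSet_eq_three_or_one_of_starK13 hstar ⟨v, hsp v⟩
  have hadj ⦃v w : V⦄ (h : H.Adj v w) :
      (H.neighborSet v).ncard = 3 ↔ (H.neighborSet w).ncard = 1 := by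
    simpa only [H.ncard_neighborSet_coe] using
      ncard_neighborSet_eq_three_iff_of_adj_of_starK13 hstar
        (v := ⟨v, hsp v⟩) (w := ⟨w, hsp w⟩) h
  refine ⟨fun u hu w hw ↦ ?_, fun v hv ↦ ?_, ?_⟩
  · exact not_adj_of_ncard_neighborSet_eq_three (K := H.spanningCoe) hadj H.spanningCoe_le hreg
      hu hw
  · exact existsUnique_adj_ncard_neighborSet_eq_three (K := H.spanningCoe) hdeg hadj
      H.spanningCoe_le hreg hv
  · have : Fintype.card V = 4 * {v | (H.neighborSet v).ncard = 3}.ncard :=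
      card_eq_four_mul_ncard_setOf_ncard_neighborSet_eq_three (K := H.spanningCoe) hdeg hadj
    omega

/-- In a finite 3-regular graph with a perfect star packing `H`, the set `C` of
star centers (vertices of degree 3 in `H`) is an independent set of `G`, every
vertex outside `C` has exactly one neighbor in `C` (i.e. `C` is an efficient
dominating set), and `C` has exactly `|V|/4` elements. -/
theorem star_centers_efficient_dominating {V : Type*} [Fintype V] [DecidableEq V]
    (G : SimpleGraph V) [DecidableRel G.Adj] (hreg : G.IsRegularOfDegree 3)
    (H : G.Subgraph) (hsp : H.IsSpanning)
    (hstar : ∀ c : H.coe.ConnectedComponent, Nonempty (H.coe.induce c.supp ≃g starK13)) :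
    (∀ u ∈ {v | (H.neighborSet v).ncard = 3}, ∀ w ∈ {v | (H.neighborSet v).ncard = 3},
        ¬ G.Adj u w) ∧
    (∀ v, v ∉ {v | (H.neighborSet v).ncard = 3} →
        ∃! u, u ∈ {v | (H.neighborSet v).ncard = 3} ∧ G.Adj v u) ∧
    {v | (H.neighborSet v).ncard = 3}.ncard = Fintype.card V / 4 :=
  star_centers_efficient_dominating_general G hreg H hsp hstar
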